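/- arXiv:1110.0255 — 6 statements merged into one kernel-verified Lean document; each statement's English description precedes it below -/
import Mathlib

section
/- Let K be a number field, S : Emb(K) → ℤ, and a ∈ ℤ such that S(σ) + S(c∘σ) = a for every σ ∈ Emb(K), where c denotes the standard complex conjugation on ℂ. Then for every nonzero x ∈ K, the square of the complex absolute value of θ^S(x) = ∏_{σ ∈ Emb(K)} σ(x)^{S(σ)} equals |N_{K/ℚ}(x)|^a, where N_{K/ℚ} is the field norm. -/
/-!
Complex conjugation permutes the embeddings, so `conj θ^S(x) = θ^{S ∘ c}(x)` and hence
`|θ^S(x)|² = θ^S(x) · θ^{S ∘ c}(x) = θ^{S + S ∘ c}(x)`. The hypothesis makes `S + S ∘ c`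
the constant `a`, and `θ^a(x) = (∏_σ σ x)^a = N(x)^a`.
-/

open ComplexConjugate NumberField NumberField.ComplexEmbedding

namespace NumberField

variable {K : Type*} [Field K] [NumberField K]

theorem prod_complexEmbeddings_eq_norm (x : K) :
    ∏ σ : K →+* ℂ, σ x = (Algebra.norm ℚ x : ℂ) := by
  rw [← eq_ratCast (algebraMap ℚ ℂ), Algebra.norm_eq_prod_embeddings ℚ ℂ x]
  exact Fintype.prod_equiv (RingHom.equivRatAlgHom K ℂ) _ _ fun _ ↦ rfl

noncomputable def algebraicCharacter (S : (K →+* ℂ) → ℤ) (x : K) : ℂ :=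
  ∏ σ : K →+* ℂ, σ x ^ S σ

theorem algebraicCharacter_add (S T : (K →+* ℂ) → ℤ) {x : K} (hx : x ≠ 0) :
    algebraicCharacter (S + T) x = algebraicCharacter S x * algebraicCharacter T x := by
  simp only [algebraicCharacter, Pi.add_apply, ← Finset.prod_mul_distrib]
  refine Finset.prod_congr rfl fun σ _ ↦ zpow_add₀ ?_ _ _
  exact (map_ne_zero σ).mpr hx

theorem algebraicCharacter_const (a : ℤ) (x : K) :
    algebraicCharacter (fun _ ↦ a) x = (Algebra.norm ℚ x : ℂ) ^ a := by
  rw [algebraicCharacter, Finset.prod_zpow, prod_complexEmbeddings_eq_norm]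

theorem conj_algebraicCharacter (S : (K →+* ℂ) → ℤ) (x : K) :
    conj (algebraicCharacter S x) = algebraicCharacter (S ∘ conjugate) x := by
  simp only [algebraicCharacter, map_prod, map_zpow₀, ← conjugate_coe_eq]
  exact Fintype.prod_equiv (involutive_conjugate K).toPerm _ _ fun σ ↦ by
    simp [involutive_conjugate K σ]

end NumberField

/-- If `S : Emb(K) → ℤ` satisfies `S(σ) + S(c∘σ) = a` for every embedding `σ : K → ℂ`
(with `c` the standard complex conjugation), then for every nonzero `x ∈ K` the square of the
complex absolute value of `θ^S(x) = ∏_σ σ(x)^{S(σ)}` equals `|N_{K/ℚ}(x)|^a`. -/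
theorem stmt1 (K : Type*) [Field K] [NumberField K] (S : (K →+* ℂ) → ℤ) (a : ℤ)
    (h : ∀ σ : K →+* ℂ, S σ + S ((starRingEnd ℂ).comp σ) = a)
    (x : K) (hx : x ≠ 0) :
    (‖(∏ σ : K →+* ℂ, σ x ^ S σ)‖) ^ 2
      = ((|Algebra.norm ℚ x| : ℚ) : ℝ) ^ a := by
  have hsum : S + S ∘ conjugate = fun _ ↦ a := funext h
  calc ‖algebraicCharacter S x‖ ^ 2
      = ‖algebraicCharacter S x * conj (algebraicCharacter S x)‖ := by
        rw [norm_mul, Complex.norm_conj, sq]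
    _ = ‖(Algebra.norm ℚ x : ℂ) ^ a‖ := by
        rw [conj_algebraicCharacter, ← algebraicCharacter_add _ _ hx, hsum,
          algebraicCharacter_const]
    _ = ((|Algebra.norm ℚ x| : ℚ) : ℝ) ^ a := by
        rw [norm_zpow, Complex.norm_ratCast, Rat.cast_abs]
end

section
/- Let K be a number field and S, S′ : Emb(K) → ℤ. If ∏_{σ ∈ Emb(K)} σ(x)^{S(σ)} = ∏_{σ ∈ Emb(K)} σ(x)^{S′(σ)} for every nonzero x ∈ K, then S = S′. (Equivalently, the group of characters of the form θ^S is free on the set of embeddings: θ^S is trivial only when S = 0.) -/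
/-!
Pick a primitive element `α` of `K`, so that the embeddings are separated by their values `σ α`.
Evaluating the hypothesis at `x = n - α` for `n ∈ ℕ` shows that the rational functions
`∏ σ, (X - σ α) ^ S σ` and `∏ σ, (X - σ α) ^ S' σ` agree at infinitely many points; clearing
denominators turns this into an identity of polynomials, and comparing the multiplicity of the
distinct roots `σ α` gives `S = S'`.
-/

open Polynomial Function

namespace Polynomial

variable {R ι : Type*} [CommRing R] [IsDomain R] [Fintype ι]

theorem roots_prod_X_sub_C_pow (a : ι → R) (m : ι → ℕ) :
    (∏ i, (X - C (a i)) ^ m i).roots = ∑ i, m i • {a i} := by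
  rw [roots_prod _ _ (Finset.prod_ne_zero_iff.2 fun i _ => pow_ne_zero _ (X_sub_C_ne_zero _))]
  simp only [roots_pow, roots_X_sub_C]
  rfl

theorem prod_X_sub_C_pow_injective {a : ι → R} (ha : Injective a) :
    Injective fun m : ι → ℕ => ∏ i, (X - C (a i)) ^ m i := by
  classical
  intro m n h
  funext j
  simpa [roots_prod_X_sub_C_pow, Multiset.count_sum', Multiset.count_singleton, ha.eq_iff]
    using congr_arg (fun p => p.roots.count (a j)) h

end Polynomial

theorem prod_pow_toNat_sub_eq_of_prod_zpow_eq {ι G₀ : Type*} [Fintype ι] [CommGroupWithZero G₀]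
    {g : ι → G₀} (hg : ∀ i, g i ≠ 0) {S S' : ι → ℤ}
    (h : ∏ i, g i ^ S i = ∏ i, g i ^ S' i) :
    ∏ i, g i ^ (S i - S' i).toNat = ∏ i, g i ^ (S' i - S i).toNat := by
  -- both sides of `hmax` are `g i ^ max (S i) (S' i)`
  have hmax : ∀ i, g i ^ S' i * g i ^ (S i - S' i).toNat
      = g i ^ S i * g i ^ (S' i - S i).toNat := by
    intro i
    rw [← zpow_natCast, ← zpow_natCast, ← zpow_add₀ (hg i), ← zpow_add₀ (hg i)]
    congr 1
    omega
  have hprod := Finset.prod_congr rfl fun i (_ : i ∈ Finset.univ) => hmax i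
  rw [Finset.prod_mul_distrib, Finset.prod_mul_distrib, h] at hprod
  exact mul_left_cancel₀ (Finset.prod_ne_zero_iff.2 fun i _ => zpow_ne_zero _ (hg i)) hprod

theorem eq_of_prod_sub_zpow_eq {F ι : Type*} [Field F] [Fintype ι] {a : ι → F}
    (ha : Injective a) {s : Set F} (hs : s.Infinite) {S S' : ι → ℤ}
    (h : ∀ z ∈ s, (∀ i, z ≠ a i) → ∏ i, (z - a i) ^ S i = ∏ i, (z - a i) ^ S' i) :
    S = S' := by
  suffices hpoly : ∏ i, (X - C (a i)) ^ (S i - S' i).toNat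
      = ∏ i, (X - C (a i)) ^ (S' i - S i).toNat by
    funext i
    have := congr_fun (prod_X_sub_C_pow_injective ha hpoly) i
    omega
  refine eq_of_infinite_eval_eq _ _ ((hs.sdiff (Set.finite_range a)).mono ?_)
  rintro z ⟨hz, hza⟩
  have hne : ∀ i, z ≠ a i := fun i e => hza ⟨i, e.symm⟩
  simpa [eval_prod] using
    prod_pow_toNat_sub_eq_of_prod_zpow_eq (fun i => sub_ne_zero.2 (hne i)) (h z hz hne)

theorem NumberField.exists_injective_ringHom_apply (K A : Type*) [Field K] [NumberField K]
    [Field A] [CharZero A] : ∃ α : K, Injective fun σ : K →+* A => σ α := by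
  obtain ⟨α, hα⟩ := Field.exists_primitive_element ℚ K
  refine ⟨α, fun σ τ hστ => ?_⟩
  have := AlgHom.ext_of_adjoin_eq_top (IntermediateField.adjoin_eq_top_iff.1 hα)
    (φ₁ := σ.toRatAlgHom) (φ₂ := τ.toRatAlgHom) (by simpa using hστ)
  exact RingHom.ext (AlgHom.ext_iff.1 this)

/-- If two algebraic characters `θ^S` and `θ^{S'}` agree on all nonzero elements of the number
field `K`, then `S = S'`; i.e. the group of characters of the form `θ^S` is free on the set of
embeddings `K → ℂ`. -/
theorem stmt2 (K : Type*) [Field K] [NumberField K] (S S' : (K →+* ℂ) → ℤ)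
    (h : ∀ x : K, x ≠ 0 →
      ∏ σ : K →+* ℂ, σ x ^ S σ = ∏ σ : K →+* ℂ, σ x ^ S' σ) :
    S = S' := by
  obtain ⟨α, hα⟩ := NumberField.exists_injective_ringHom_apply K ℂ
  refine eq_of_prod_sub_zpow_eq hα (Set.infinite_range_of_injective Nat.cast_injective) ?_
  rintro - ⟨n, rfl⟩ hn
  have hnα : (n : K) - α ≠ 0 := by
    obtain ⟨σ⟩ := (inferInstance : Nonempty (K →+* ℂ))
    exact sub_ne_zero.2 fun e => hn σ (by rw [← e, map_natCast])
  simpa using h _ hnα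
end

section
/- Let K be a number field and a : Emb(K) → ℕ. Then there exists a finite-dimensional complex vector space V of dimension ∑_σ a(σ) together with a ℚ-algebra homomorphism ρ : K → End_ℂ(V) such that for every x ∈ K, the ℂ-linear determinant of ρ(x) equals ∏_{σ ∈ Emb(K)} σ(x)^{a(σ)}. Moreover (V, ρ) is unique up to isomorphism: if (V′, ρ′) is another such pair satisfying the same determinant identity for all x ∈ K, then there is a ℂ-linear isomorphism V ≅ V′ intertwining ρ and ρ′. -/
/-!
Choose a primitive element `θ` of `K / ℚ`. For any representation `ρ`, the operator `ρ θ` is killed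
by the separable polynomial `minpoly ℚ θ`, so it is diagonalizable with eigenvalues among the `σ θ`,
and `K = ℚ[θ]` acts on the `σ θ`-eigenspace through `σ`. Thus `ρ` has an eigenbasis on which `x`
acts by `σ x` with some multiplicities `m σ`, and `det ρ(x) = ∏ σ, σ x ^ m σ`.
Evaluating at `x = t - θ` for rational `t` gives the polynomial `∏ σ, (X - σ θ) ^ m σ`, whose root
multiplicities are the `m σ` since the `σ θ` are distinct. So the determinant determines `ρ` up to
isomorphism, and a diagonal representation realizes any multiplicities.
-/

open Polynomial Module

theorem RingHom.map_aeval_eq_aeval_map {A B : Type*} [Ring A] [Algebra ℚ A] [Ring B] [Algebra ℂ B]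
    (f : A →+* B) (x : A) (g : ℚ[X]) :
    f (aeval x g) = aeval (f x) (g.map (algebraMap ℚ ℂ)) := by
  rw [aeval_def, hom_eval₂, aeval_def, eval₂_map, Subsingleton.elim (f.comp (algebraMap ℚ A))]

theorem LinearMap.det_eq_prod_of_apply_eq_smul {R M ι : Type*} [CommRing R] [AddCommGroup M]
    [Module R M] [Fintype ι] [DecidableEq ι] (b : Basis ι R M) {f : M →ₗ[R] M} {d : ι → R}
    (hf : ∀ i, f (b i) = d i • b i) : LinearMap.det f = ∏ i, d i := by
  have hdiag : f = Matrix.toLin b b (Matrix.diagonal d) := b.ext fun i => by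
    simp [Matrix.toLin_self, Matrix.diagonal_apply, hf]
  rw [hdiag, LinearMap.det_toLin, Matrix.det_diagonal]

theorem Module.Basis.equiv_apply_comm_of_apply_eq_smul {R M M' ι : Type*} [Semiring R]
    [AddCommMonoid M] [Module R M] [AddCommMonoid M'] [Module R M']
    (b : Basis ι R M) (b' : Basis ι R M')
    {f : M →ₗ[R] M} {f' : M' →ₗ[R] M'} {d : ι → R}
    (hf : ∀ i, f (b i) = d i • b i) (hf' : ∀ i, f' (b' i) = d i • b' i) (v : M) :
    b.equiv b' (Equiv.refl ι) (f v) = f' (b.equiv b' (Equiv.refl ι) v) :=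
  LinearMap.congr_fun (b.ext (f₁ := (b.equiv b' (Equiv.refl ι)).toLinearMap ∘ₗ f)
    (f₂ := f' ∘ₗ b.equiv b' (Equiv.refl ι)) fun i => by simp [hf, hf']) v

theorem Fintype.prod_sigma_fin {ι M : Type*} [Fintype ι] [CommMonoid M] (m : ι → ℕ) (f : ι → M) :
    ∏ j : Σ i, Fin (m i), f j.1 = ∏ i, f i ^ m i := by
  simp [Fintype.prod_sigma]

section

variable {K : Type*} [Field K]

def diagonalRep {ι : Type*} [Fintype ι] [DecidableEq ι] (κ : ι → K →+* ℂ) :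
    K →+* End ℂ (ι → ℂ) :=
  (Matrix.toLinAlgEquiv' : Matrix ι ι ℂ ≃ₐ[ℂ] End ℂ (ι → ℂ)).toRingHom.comp
    ((Matrix.diagonalRingHom ι ℂ).comp (RingHom.pi κ))

theorem det_diagonalRep {ι : Type*} [Fintype ι] [DecidableEq ι] (κ : ι → K →+* ℂ) (x : K) :
    LinearMap.det (diagonalRep κ x) = ∏ i, κ i x := by
  show LinearMap.det (Matrix.toLin' (Matrix.diagonal fun i => κ i x)) = _
  rw [LinearMap.det_toLin', Matrix.det_diagonal]

end

section

variable {K : Type*} [Field K] [NumberField K]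

theorem injective_apply_gen (pb : PowerBasis ℚ K) :
    Function.Injective fun σ : K →+* ℂ => σ pb.gen := fun σ τ h =>
  congrArg AlgHom.toRingHom (pb.algHom_ext (f := σ.toRatAlgHom) (g := τ.toRatAlgHom) h)

theorem count_roots_prod_X_sub_C_pow (pb : PowerBasis ℚ K) (m : (K →+* ℂ) → ℕ) (τ : K →+* ℂ) :
    (∏ σ : K →+* ℂ, (X - C (σ pb.gen)) ^ m σ).roots.count (τ pb.gen) = m τ := by
  classical
  rw [roots_prod _ _ (Finset.prod_ne_zero_iff.mpr fun σ _ => pow_ne_zero _ (X_sub_C_ne_zero _))]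
  simp [Multiset.count_bind, Multiset.count_singleton, (injective_apply_gen pb).eq_iff]

theorem eq_of_forall_prod_pow_eq (pb : PowerBasis ℚ K) {m n : (K →+* ℂ) → ℕ}
    (h : ∀ x : K, ∏ σ : K →+* ℂ, σ x ^ m σ = ∏ σ : K →+* ℂ, σ x ^ n σ) : m = n := by
  have hP : ∏ σ : K →+* ℂ, (X - C (σ pb.gen)) ^ m σ =
      ∏ σ : K →+* ℂ, (X - C (σ pb.gen)) ^ n σ := by
    refine eq_of_infinite_eval_eq _ _
      ((Set.infinite_range_of_injective Rat.cast_injective).mono ?_)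
    rintro _ ⟨t, rfl⟩
    simpa [eval_prod] using h (t - pb.gen)
  funext τ
  rw [← count_roots_prod_X_sub_C_pow pb m τ, hP, count_roots_prod_X_sub_C_pow]

section

variable {V : Type*} [AddCommGroup V] [Module ℂ V] (pb : PowerBasis ℚ K) (ρ : K →+* End ℂ V)

theorem apply_eq_smul_of_mem_eigenspace_gen {σ : K →+* ℂ} {v : V}
    (hv : v ∈ (ρ pb.gen).eigenspace (σ pb.gen)) (x : K) : ρ x v = σ x • v := by
  obtain ⟨g, rfl⟩ := pb.exists_eq_aeval' x
  rw [ρ.map_aeval_eq_aeval_map, σ.map_aeval_eq_aeval_map,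
    Module.End.aeval_apply_of_mem_apply_eq_smul (Module.End.mem_eigenspace_iff.mp hv),
    coe_aeval_eq_eval]

theorem aeval_apply_gen_map_minpoly_eq_zero :
    aeval (ρ pb.gen) ((minpoly ℚ pb.gen).map (algebraMap ℚ ℂ)) = 0 := by
  rw [← ρ.map_aeval_eq_aeval_map, minpoly.aeval, map_zero]

theorem iSup_eigenspace_apply_gen_eq_top [FiniteDimensional ℂ V] :
    ⨆ σ : K →+* ℂ, (ρ pb.gen).eigenspace (σ pb.gen) = ⊤ := by
  have hss : (ρ pb.gen).IsSemisimple := Module.End.isSemisimple_of_squarefree_aeval_eq_zero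
    (Separable.map (Algebra.IsSeparable.isSeparable ℚ pb.gen)).squarefree
    (aeval_apply_gen_map_minpoly_eq_zero pb ρ)
  refine eq_top_iff.mpr (hss.iSup_eigenspace_eq_top.symm.le.trans (iSup_le fun μ => ?_))
  by_cases hμ : (ρ pb.gen).HasEigenvalue μ
  · obtain ⟨σ, rfl⟩ : μ ∈ Set.range fun σ : K →+* ℂ => σ pb.gen := by
      have hroot := (Module.End.isRoot_of_hasEigenvalue hμ).dvd
        (minpoly.dvd ℂ _ (aeval_apply_gen_map_minpoly_eq_zero pb ρ))
      rw [NumberField.Embeddings.range_eval_eq_rootSet_minpoly,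
        mem_rootSet_of_ne (minpoly.ne_zero (IsIntegral.of_finite ℚ pb.gen)),
        ← eval_map_algebraMap]
      exact hroot
    exact le_iSup (fun σ : K →+* ℂ => (ρ pb.gen).eigenspace (σ pb.gen)) σ
  · rw [Module.End.hasEigenvalue_iff, not_not] at hμ
    simp [hμ]

theorem exists_basis_apply_eq_smul [FiniteDimensional ℂ V] :
    ∃ (m : (K →+* ℂ) → ℕ) (b : Basis (Σ σ : K →+* ℂ, Fin (m σ)) ℂ V),
      ∀ x j, ρ x (b j) = j.1 x • b j := by
  classical
  let pb := Field.powerBasisOfFiniteOfSeparable ℚ K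
  have hV : DirectSum.IsInternal fun σ : K →+* ℂ => (ρ pb.gen).eigenspace (σ pb.gen) :=
    DirectSum.isInternal_submodule_of_iSupIndep_of_iSup_eq_top
      ((Module.End.eigenspaces_iSupIndep _).comp (injective_apply_gen pb))
      (iSup_eigenspace_apply_gen_eq_top pb ρ)
  exact ⟨_, hV.collectedBasis fun σ => finBasis ℂ _, fun x j =>
    apply_eq_smul_of_mem_eigenspace_gen pb ρ (hV.collectedBasis_mem _ j) x⟩

end

theorem exists_linearEquiv_intertwining_of_det_eq {V V' : Type*} [AddCommGroup V] [Module ℂ V]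
    [FiniteDimensional ℂ V] [AddCommGroup V'] [Module ℂ V'] [FiniteDimensional ℂ V']
    (ρ : K →+* End ℂ V) (ρ' : K →+* End ℂ V')
    (h : ∀ x, LinearMap.det (ρ x) = LinearMap.det (ρ' x)) :
    ∃ e : V ≃ₗ[ℂ] V', ∀ x v, e (ρ x v) = ρ' x (e v) := by
  classical
  obtain ⟨m, b, hb⟩ := exists_basis_apply_eq_smul ρ
  obtain ⟨m', b', hb'⟩ := exists_basis_apply_eq_smul ρ'
  obtain rfl : m = m' := eq_of_forall_prod_pow_eq (Field.powerBasisOfFiniteOfSeparable ℚ K)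
    fun x => by
      rw [← Fintype.prod_sigma_fin, ← Fintype.prod_sigma_fin,
        ← LinearMap.det_eq_prod_of_apply_eq_smul b (hb x),
        ← LinearMap.det_eq_prod_of_apply_eq_smul b' (hb' x), h]
  exact ⟨b.equiv b' (Equiv.refl _), fun x => b.equiv_apply_comm_of_apply_eq_smul b' (hb x) (hb' x)⟩

end

/-- For a number field `K` and `a : Emb(K) → ℕ`, there exists a finite-dimensional complex
vector space `V` of dimension `∑ σ, a σ` together with a (ℚ-algebra, equivalently ring)
homomorphism `ρ : K → End_ℂ(V)` whose `ℂ`-linear determinant is `x ↦ ∏ σ, σ(x)^{a σ}`;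
moreover such a pair `(V, ρ)` is unique up to isomorphism. -/
theorem stmt3 (K : Type*) [Field K] [NumberField K] (a : (K →+* ℂ) → ℕ) :
    ∃ (V : Type) (_ : AddCommGroup V) (_ : Module ℂ V) (_ : FiniteDimensional ℂ V)
      (ρ : K →+* Module.End ℂ V),
      Module.finrank ℂ V = ∑ σ : K →+* ℂ, a σ ∧
      (∀ x : K, LinearMap.det (ρ x) = ∏ σ : K →+* ℂ, σ x ^ a σ) ∧
      (∀ (V' : Type) (_ : AddCommGroup V') (_ : Module ℂ V') (_ : FiniteDimensional ℂ V')
        (ρ' : K →+* Module.End ℂ V'),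
        (∀ x : K, LinearMap.det (ρ' x) = ∏ σ : K →+* ℂ, σ x ^ a σ) →
        ∃ e : V ≃ₗ[ℂ] V', ∀ (x : K) (v : V), e (ρ x v) = ρ' x (e v)) := by
  classical
  let N := ∑ σ : K →+* ℂ, a σ
  let φ : (Σ σ : K →+* ℂ, Fin (a σ)) ≃ Fin N := Fintype.equivFinOfCardEq (by simp [N])
  let ρ := diagonalRep fun j : Fin N => (φ.symm j).1
  have hdet (x : K) : LinearMap.det (ρ x) = ∏ σ : K →+* ℂ, σ x ^ a σ := by
    rw [det_diagonalRep, φ.symm.prod_comp fun j => j.1 x, Fintype.prod_sigma_fin a fun σ => σ x]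
  refine ⟨Fin N → ℂ, inferInstance, inferInstance, inferInstance, ρ, by simp [N], hdet,
    fun V' _ _ _ ρ' hdet' => ?_⟩
  exact exists_linearEquiv_intertwining_of_det_eq ρ ρ' fun x => (hdet x).trans (hdet' x).symm
end

section
/- Let g ≥ 1 and k ≥ 1 be integers and q a prime with q ≡ 3 (mod 2^k). If M is an element of the symplectic group Sp_{2g}(𝔽_q) whose multiplicative order is exactly 2^k, then 2^{k−1} ≤ 2g. -/
/-!
An element of order `2^k` in `Sp_{2g}(𝔽_q)` has an eigenvalue `ζ` of order `2^k` in `\bar{𝔽}_q`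
(a root of its minimal polynomial dividing `X^{2^{k-1}} + 1`). The eigenvalues are permuted by
Frobenius `x ↦ x^q`, and, the characteristic polynomial of a symplectic matrix being palindromic,
by `x ↦ x⁻¹`. So all `ζ^{±q^i}` are eigenvalues; for `k ≥ 3` and `q ≡ 3 (mod 2^k)` these are
`2^{k-1}` distinct numbers, because `3` has order `2^{k-2}` modulo `2^k` and `-1` is not a power
of `3` modulo `8`. The characteristic polynomial has degree `2g`.
-/

open Polynomial Matrix

theorem exists_odd_three_pow_two_pow_succ_eq (s : ℕ) :
    ∃ u, Odd u ∧ 3 ^ 2 ^ (s + 1) = 2 ^ (s + 3) * u + 1 := by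
  induction s with
  | zero => exact ⟨1, odd_one, by norm_num⟩
  | succ s ih =>
    obtain ⟨u, hu, h⟩ := ih
    refine ⟨u + 2 ^ (s + 2) * u ^ 2, hu.add_even ?_, ?_⟩
    · exact (Nat.even_pow.mpr ⟨even_two, by omega⟩).mul_right _
    · rw [pow_succ 2 (s + 1), pow_mul, h]
      ring

theorem ZMod.orderOf_three_two_pow (n : ℕ) : orderOf (3 : ZMod (2 ^ (n + 3))) = 2 ^ (n + 1) := by
  apply orderOf_eq_prime_pow
  · cases n with
    | zero => decide
    | succ m =>
      obtain ⟨u, hu, h⟩ := exists_odd_three_pow_two_pow_succ_eq m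
      intro h1
      have h2 : ((2 ^ (m + 3) * u : ℕ) : ZMod (2 ^ (m + 1 + 3))) = 0 := by
        have : ((3 ^ 2 ^ (m + 1) : ℕ) : ZMod (2 ^ (m + 1 + 3))) = 1 := by exact_mod_cast h1
        rw [h] at this
        push_cast at this
        simpa using this
      rw [ZMod.natCast_eq_zero_iff, pow_succ 2 (m + 3),
        Nat.mul_dvd_mul_iff_left (by positivity)] at h2
      exact Nat.not_even_iff_odd.mpr hu (even_iff_two_dvd.mpr h2)
  · obtain ⟨u, -, h⟩ := exists_odd_three_pow_two_pow_succ_eq n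
    have : ((3 ^ 2 ^ (n + 1) : ℕ) : ZMod (2 ^ (n + 3))) = 1 := by
      rw [h, Nat.cast_add, Nat.cast_mul, ZMod.natCast_self, zero_mul, zero_add, Nat.cast_one]
    exact_mod_cast this

theorem ZMod.three_pow_ne_neg_three_pow (n i j : ℕ) : (3 : ZMod (2 ^ (n + 3))) ^ i ≠ -3 ^ j := by
  have mod_eight (i : ℕ) : (3 : ZMod 8) ^ i = 3 ^ (i % 2) := pow_eq_pow_mod i rfl
  intro h
  have h8 := congrArg (ZMod.castHom (pow_dvd_pow 2 (by omega : 3 ≤ n + 3)) (ZMod (2 ^ 3))) h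
  simp only [map_pow, map_neg, map_ofNat] at h8
  rw [mod_eight i, mod_eight j] at h8
  rcases Nat.mod_two_eq_zero_or_one i with hi | hi <;>
    rcases Nat.mod_two_eq_zero_or_one j with hj | hj <;> rw [hi, hj] at h8 <;> revert h8 <;> decide

theorem Polynomial.aeval_pow_card_eq_zero {F K : Type*} [Field F] [Fintype F] [CommRing K]
    [Algebra F K] {p : F[X]} {x : K} (hx : aeval x p = 0) : aeval (x ^ Fintype.card F) p = 0 := by
  rw [← expand_aeval, FiniteField.expand_card, map_pow, hx, zero_pow Fintype.card_ne_zero]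

namespace SymplecticGroup

variable {l R : Type*} [DecidableEq l] [Fintype l] [CommRing R] {A : Matrix (l ⊕ l) (l ⊕ l) R}

theorem charpoly_inv (hA : A ∈ symplecticGroup l R) : A⁻¹.charpoly = A.charpoly := by
  rw [inv_eq_symplectic_inv A hA, charpoly_mul_comm, ← mul_assoc, mul_neg, J_squared, neg_neg,
    one_mul, charpoly_transpose]

theorem reverse_charpoly (hA : A ∈ symplecticGroup l R) : A.charpoly.reverse = A.charpoly := by
  have hunit : IsUnit A := (isUnit_iff_isUnit_det A).mpr (symplectic_det hA)
  rw [Matrix.reverse_charpoly, ← charpoly_inv hA, Matrix.charpoly_inv A hunit, det_eq_one hA,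
    Fintype.card_sum, ← two_mul, pow_mul, neg_one_sq, one_pow, Ring.inverse_one, map_one,
    mul_one, one_mul]

theorem aeval_inv_charpoly_eq_zero {K : Type*} [Field K] [Algebra R K]
    (hA : A ∈ symplecticGroup l R) {x : K} (hx : aeval x A.charpoly = 0) :
    aeval x⁻¹ A.charpoly = 0 := by
  rcases eq_or_ne x 0 with rfl | hx0
  · simpa using hx
  have : Invertible x := invertibleOfNonzero hx0
  rw [← reverse_charpoly hA, ← invOf_eq_inv, aeval_def, eval₂_reverse_eq_zero_iff, ← aeval_def]
  exact hx

end SymplecticGroup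

theorem isPrimitiveRoot_of_pow_two_pow_eq_neg_one {R : Type*} [CommRing R] {ζ : R} {m : ℕ}
    (h : ζ ^ 2 ^ m = -1) (hR : (-1 : R) ≠ 1) : IsPrimitiveRoot ζ (2 ^ (m + 1)) := by
  rw [← orderOf_eq_prime_pow (by rwa [h]) (by rw [pow_succ, pow_mul, h, neg_one_sq])]
  exact IsPrimitiveRoot.orderOf ζ

theorem Matrix.exists_aeval_charpoly_eq_zero_of_aeval_mul_eq_zero {n F K : Type*} [Fintype n]
    [DecidableEq n] [Field F] [Field K] [IsAlgClosed K] [Algebra F K] {A : Matrix n n F}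
    {p r : F[X]} (h : aeval A (p * r) = 0) (hp : aeval A p ≠ 0) :
    ∃ x : K, aeval x r = 0 ∧ aeval x A.charpoly = 0 := by
  obtain ⟨m₁, m₂, hm₁, hm₂, hm⟩ := exists_dvd_and_dvd_of_dvd_mul (minpoly.dvd F A h)
  have hdeg : m₂.degree ≠ 0 := fun hdeg ↦ hp <| minpoly.dvd_iff.mp <|
    hm ▸ (isUnit_iff_degree_eq_zero.mpr hdeg).mul_right_dvd.mpr hm₁
  obtain ⟨x, hx⟩ := IsAlgClosed.exists_aeval_eq_zero K m₂ hdeg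
  have hm₂A : m₂ ∣ A.charpoly := (hm ▸ dvd_mul_left m₂ m₁).trans (Matrix.minpoly_dvd_charpoly A)
  exact ⟨x, aeval_eq_zero_of_dvd_aeval_eq_zero hm₂ hx, aeval_eq_zero_of_dvd_aeval_eq_zero hm₂A hx⟩

theorem Matrix.exists_isPrimitiveRoot_aeval_charpoly_eq_zero {n F K : Type*} [Fintype n]
    [DecidableEq n] [Field F] [Field K] [IsAlgClosed K] [Algebra F K] (hK : (-1 : K) ≠ 1)
    {A : Matrix n n F} {m : ℕ} (hA : orderOf A = 2 ^ (m + 1)) :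
    ∃ ζ : K, IsPrimitiveRoot ζ (2 ^ (m + 1)) ∧ aeval ζ A.charpoly = 0 := by
  have hfactor : (X ^ 2 ^ m - 1) * (X ^ 2 ^ m + 1) = (X ^ 2 ^ (m + 1) - 1 : F[X]) := by ring
  have hroot : aeval A ((X ^ 2 ^ m - 1) * (X ^ 2 ^ m + 1) : F[X]) = 0 := by
    simp [hfactor, ← hA, pow_orderOf_eq_one]
  have hnot : aeval A (X ^ 2 ^ m - 1 : F[X]) ≠ 0 := by
    simpa [sub_eq_zero] using
      pow_ne_one_of_lt_orderOf (by positivity) (hA ▸ Nat.pow_lt_pow_right one_lt_two m.lt_succ_self)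
  obtain ⟨ζ, hζ, hζA⟩ := exists_aeval_charpoly_eq_zero_of_aeval_mul_eq_zero (K := K) hroot hnot
  refine ⟨ζ, isPrimitiveRoot_of_pow_two_pow_eq_neg_one ?_ hK, hζA⟩
  simpa [← eq_neg_iff_add_eq_zero] using hζ

theorem two_pow_le_card_of_pow_mem_of_inv_mem {K : Type*} [Field K] {S : Finset K} {ζ : K}
    {n q : ℕ} (hζ : IsPrimitiveRoot ζ (2 ^ (n + 3))) (hq : (q : ZMod (2 ^ (n + 3))) = 3)
    (hζS : ζ ∈ S) (hpow : ∀ x ∈ S, x ^ q ∈ S) (hinv : ∀ x ∈ S, x⁻¹ ∈ S) :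
    2 ^ (n + 2) ≤ S.card := by
  have hiter (x : K) (hx : x ∈ S) (i : ℕ) : x ^ q ^ i ∈ S := by
    induction i with
    | zero => simpa
    | succ i ih => rw [pow_succ, pow_mul]; exact hpow _ ih
  have hexp {ξ : K} (hξ : IsPrimitiveRoot ξ (2 ^ (n + 3))) {a b : ℕ} (h : ξ ^ a = ξ ^ b) :
      (a : ZMod (2 ^ (n + 3))) = b := by
    rw [ZMod.natCast_eq_natCast_iff', hξ.eq_orderOf]
    exact (hξ.isOfFinOrder (by positivity)).pow_inj_mod.mp h
  have hpow_inj {ξ : K} (hξ : IsPrimitiveRoot ξ (2 ^ (n + 3))) {i j : Fin (2 ^ (n + 1))}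
      (h : ξ ^ q ^ (i : ℕ) = ξ ^ q ^ (j : ℕ)) : i = j := by
    have h3 := hexp hξ h
    push_cast [hq] at h3
    have hord := ZMod.orderOf_three_two_pow n
    exact Fin.ext (pow_injOn_Iio_orderOf (by simp [hord]) (by simp [hord]) h3)
  have hcross (i j : ℕ) : ζ ^ q ^ i ≠ ζ⁻¹ ^ q ^ j := by
    intro h
    rw [inv_pow, ← mul_eq_one_iff_eq_inv₀ (pow_ne_zero _ (hζ.ne_zero (by positivity))), ← pow_add,
      hζ.pow_eq_one_iff_dvd, ← ZMod.natCast_eq_zero_iff] at h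
    push_cast [hq] at h
    exact ZMod.three_pow_ne_neg_three_pow n i j (eq_neg_of_add_eq_zero_left h)
  let r : Fin (2 ^ (n + 1)) ⊕ Fin (2 ^ (n + 1)) → K :=
    Sum.elim (fun i ↦ ζ ^ q ^ (i : ℕ)) (fun i ↦ ζ⁻¹ ^ q ^ (i : ℕ))
  have hr : Function.Injective r := by
    rintro (i | i) (j | j) h
    · exact congrArg _ (hpow_inj hζ h)
    · exact absurd h (hcross i j)
    · exact absurd h.symm (hcross j i)
    · exact congrArg _ (hpow_inj hζ.inv h)
  calc 2 ^ (n + 2) = (Finset.univ : Finset (Fin (2 ^ (n + 1)) ⊕ Fin (2 ^ (n + 1)))).card := by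
        simp [pow_succ]; ring
    _ ≤ S.card := Finset.card_le_card_of_injOn r
        (by rintro (i | i) - <;> simp [r, hiter, hζS, hinv]) hr.injOn

theorem stmt10_general (g k : ℕ) (hg : 1 ≤ g) (q : ℕ) (hq : q.Prime)
    (hq3 : q ≡ 3 [MOD 2 ^ k])
    (M : Matrix.symplecticGroup (Fin g) (ZMod q)) (hM : orderOf M = 2 ^ k) :
    2 ^ (k - 1) ≤ 2 * g := by
  obtain hk | ⟨n, rfl⟩ : k ≤ 2 ∨ ∃ n, k = n + 3 := by
    rcases le_or_gt k 2 with hk | hk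
    exacts [.inl hk, .inr ⟨k - 3, by omega⟩]
  · calc 2 ^ (k - 1) ≤ 2 ^ 1 := Nat.pow_le_pow_right two_pos (by omega)
      _ ≤ 2 * g := by omega
  classical
  have : Fact q.Prime := ⟨hq⟩
  have : Fact (2 < q) := ⟨by
    have h8 : 2 ^ 3 ≤ 2 ^ (n + 3) := Nat.pow_le_pow_right two_pos (by omega)
    have := Nat.mod_le q (2 ^ (n + 3))
    rw [Nat.ModEq, Nat.mod_eq_of_lt (a := 3) (by omega)] at hq3
    omega⟩
  set K := AlgebraicClosure (ZMod q)
  have hK : (-1 : K) ≠ 1 := fun h ↦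
    ZMod.neg_one_ne_one ((algebraMap (ZMod q) K).injective (by simpa using h))
  set A : Matrix (Fin g ⊕ Fin g) (Fin g ⊕ Fin g) (ZMod q) := M.1
  obtain ⟨ζ, hζ, hζA⟩ := Matrix.exists_isPrimitiveRoot_aeval_charpoly_eq_zero hK
    ((orderOf_submonoid M).trans hM)
  let S := (A.charpoly.aroots K).toFinset
  have hS (x : K) : x ∈ S ↔ aeval x A.charpoly = 0 := by
    simp [S, (charpoly_monic A).ne_zero]
  calc 2 ^ (n + 3 - 1) = 2 ^ (n + 2) := rfl
    _ ≤ S.card := two_pow_le_card_of_pow_mem_of_inv_mem hζ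
        ((ZMod.natCast_eq_natCast_iff _ _ _).mpr hq3) ((hS ζ).mpr hζA)
        (fun x hx ↦ (hS _).mpr (by simpa using aeval_pow_card_eq_zero ((hS x).mp hx)))
        (fun x hx ↦ (hS _).mpr (SymplecticGroup.aeval_inv_charpoly_eq_zero M.2 ((hS x).mp hx)))
    _ ≤ A.charpoly.natDegree := (Multiset.toFinset_card_le _).trans (card_roots_map_le_natDegree _)
    _ = 2 * g := by simp [two_mul]

/-- Let `g, k ≥ 1` and `q` a prime with `q ≡ 3 (mod 2^k)`.  If `M` is an element of
`Sp_{2g}(𝔽_q)` of multiplicative order exactly `2^k`, then `2^{k-1} ≤ 2g`. -/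
theorem stmt10 (g k : ℕ) (hg : 1 ≤ g) (hk : 1 ≤ k) (q : ℕ) (hq : q.Prime)
    (hq3 : q ≡ 3 [MOD 2 ^ k])
    (M : Matrix.symplecticGroup (Fin g) (ZMod q)) (hM : orderOf M = 2 ^ k) :
    2 ^ (k - 1) ≤ 2 * g :=
  stmt10_general g k hg q hq hq3 M hM
end

section
/- For every integer g ≥ 1, the product ∏ p^k, taken over all prime powers p^k (p prime, k ≥ 1) satisfying (p−1)p^{k−1} ≤ 2g < (p−1)p^k, is strictly less than 12^{4g²}. -/
/-!
Since `p ≤ 2 (p - 1)`, every prime power with `(p - 1) p^(k-1) ≤ 2g` satisfies `p^k ≤ 4g`.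
The product is therefore one of distinct integers in `[1, 4g]`, hence at most
`(4g)! ≤ (4g)^(4g) < (12^g)^(4g)`.
-/

open Nat

theorem Nat.Prime.pow_le_two_mul {p k m : ℕ} (hp : p.Prime) (hk : 1 ≤ k)
    (h : (p - 1) * p ^ (k - 1) ≤ m) : p ^ k ≤ 2 * m := by
  obtain ⟨j, rfl⟩ := Nat.exists_eq_add_of_le' hk
  have hp2 := hp.two_le
  calc p ^ (j + 1) = p * p ^ j := pow_succ' ..
    _ ≤ 2 * (p - 1) * p ^ j := Nat.mul_le_mul_right _ (by omega)
    _ = 2 * ((p - 1) * p ^ (j + 1 - 1)) := by simp [mul_assoc]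
    _ ≤ 2 * m := Nat.mul_le_mul_left 2 h

theorem finprod_mem_id_le_factorial {s : Set ℕ} {N : ℕ} (hs : s ⊆ Set.Icc 1 N) :
    ∏ᶠ n ∈ s, n ≤ N ! := by
  have hfin : s.Finite := (Set.finite_Icc 1 N).subset hs
  rw [finprod_mem_eq_finite_toFinset_prod _ hfin, ← Finset.prod_Ico_id_eq_factorial]
  refine Finset.prod_le_prod_of_subset_of_one_le' (fun n hn ↦ ?_) (fun n hn _ ↦ ?_)
  · obtain ⟨h1, hN⟩ := hs (hfin.mem_toFinset.mp hn)
    exact Finset.mem_Ico.mpr ⟨h1, Nat.lt_succ_of_le hN⟩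
  · exact (Finset.mem_Ico.mp hn).1

theorem factorial_lt_pow_mul {N b e : ℕ} (hN : 0 < N) (h : N < b ^ e) : N ! < b ^ (e * N) :=
  calc N ! ≤ N ^ N := N.factorial_le_pow
    _ < (b ^ e) ^ N := Nat.pow_lt_pow_left h hN.ne'
    _ = b ^ (e * N) := (pow_mul b e N).symm

theorem four_mul_lt_twelve_pow (g : ℕ) : 4 * g < 12 ^ g := by
  have bernoulli : (1 + g * 11 : ℤ) ≤ 12 ^ g :=
    (one_add_mul_le_pow (by norm_num) g).trans_eq (by norm_num)
  have : 1 + g * 11 ≤ 12 ^ g := by exact_mod_cast bernoulli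
  omega

/-- For every `g ≥ 1`, the product `∏ p^k`, over all prime powers `p^k` satisfying
`(p-1)p^{k-1} ≤ 2g < (p-1)p^k`, is strictly less than `12^(4g²)`. -/
theorem stmt12 (g : ℕ) (hg : 1 ≤ g) :
    (∏ᶠ n ∈ {n : ℕ | ∃ p k : ℕ, p.Prime ∧ 1 ≤ k ∧ n = p ^ k ∧
        (p - 1) * p ^ (k - 1) ≤ 2 * g ∧ 2 * g < (p - 1) * p ^ k}, n)
      < 12 ^ (4 * g ^ 2) := by
  have hsub : {n : ℕ | ∃ p k : ℕ, p.Prime ∧ 1 ≤ k ∧ n = p ^ k ∧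
      (p - 1) * p ^ (k - 1) ≤ 2 * g ∧ 2 * g < (p - 1) * p ^ k} ⊆ Set.Icc 1 (4 * g) := by
    rintro _ ⟨p, k, hp, hk, rfl, hle, -⟩
    exact ⟨Nat.one_le_pow _ _ hp.pos, by linarith [hp.pow_le_two_mul hk hle]⟩
  calc _ ≤ (4 * g) ! := finprod_mem_id_le_factorial hsub
    _ < 12 ^ (g * (4 * g)) := factorial_lt_pow_mul (by omega) (four_mul_lt_twelve_pow g)
    _ = 12 ^ (4 * g ^ 2) := by ring
end

section
/- Let k be a field and let K and F be finite separable field extensions of k. Let W be a finitely generated module over the k-algebra K ⊗_k F. Then there is an isomorphism of K ⊗_k F-modules Hom_K(W, K) ≅ Hom_F(W, F), where on Hom_K(W, K) the field K acts via its action on the target K and F acts by precomposition with the F-module structure of W, and symmetrically on Hom_F(W, F), with K acting by precomposition and F via the target. In particular, for each of the two Hom-modules the map ℓ ↦ Tr∘ℓ (composition with the trace of the respective extension of k) identifies it K ⊗_k F-linearly with Hom_k(W, k). -/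
/-!
For a finite separable extension `K / k` the trace form is nondegenerate, so `f ↦ Tr ∘ f` is
an injective `k`-linear map `Hom_K(W, K) → Hom_k(W, k)`; both sides have `k`-dimension
`dim_k W`, hence it is bijective. Since `Tr (c • f w) = Tr (f (c • w))`, it turns the action of
`K` on the target into precomposition. Composing the trace isomorphism for `K` with the inverse
of the one for `F` gives `Hom_K(W, K) ≅ Hom_F(W, F)`, and the two compatibilities combine to
the required equivariance.
-/

open Module

section traceComp

variable (k K W : Type*) [CommRing k] [CommRing K] [Algebra k K]
  [AddCommMonoid W] [Module k W] [Module K W] [IsScalarTower k K W]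

noncomputable def traceComp : (W →ₗ[K] K) →ₗ[k] (W →ₗ[k] k) where
  toFun f := (Algebra.trace k K).comp (f.restrictScalars k)
  map_add' f g := by ext w; simp
  map_smul' a f := by ext w; simp

variable {k K W}

@[simp]
lemma traceComp_apply (f : W →ₗ[K] K) (w : W) :
    traceComp k K W f w = Algebra.trace k K (f w) := rfl

lemma traceComp_smul_apply (c : K) (f : W →ₗ[K] K) (w : W) :
    traceComp k K W (c • f) w = traceComp k K W f (c • w) := by
  simp only [traceComp_apply, LinearMap.smul_apply, map_smul]

lemma traceComp_comp_toLinearMap {S : Type*} [DistribSMul S W]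
    [SMulCommClass S K W] [SMulCommClass S k W] (s : S) (f : W →ₗ[K] K) :
    traceComp k K W (f.comp (DistribSMul.toLinearMap K W s)) =
      (traceComp k K W f).comp (DistribSMul.toLinearMap k W s) := rfl

end traceComp

section Field

variable (k K W : Type*) [Field k] [Field K] [Algebra k K] [FiniteDimensional k K]
  [Algebra.IsSeparable k K] [AddCommGroup W] [Module k W] [Module K W] [IsScalarTower k K W]

lemma traceComp_injective : Function.Injective (traceComp k K W) := by
  rw [← LinearMap.ker_eq_bot, LinearMap.ker_eq_bot']
  intro f hf
  ext w
  refine (traceForm_nondegenerate k K).1 (f w) fun c => ?_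
  have h : traceComp k K W f (c • w) = 0 := by rw [hf, LinearMap.zero_apply]
  simpa [Algebra.traceForm_apply, mul_comm] using h

variable [FiniteDimensional K W]

lemma traceComp_bijective : Function.Bijective (traceComp k K W) := by
  have : FiniteDimensional k W := FiniteDimensional.trans k K W
  have hdim : finrank k (W →ₗ[K] K) = finrank k (W →ₗ[k] k) := by
    rw [finrank_linearMap, finrank_linearMap_self, mul_comm, finrank_mul_finrank]
  have hinj := traceComp_injective k K W
  exact ⟨hinj, (LinearMap.injective_iff_surjective_of_finrank_eq_finrank hdim).mp hinj⟩

noncomputable def traceCompEquiv : (W →ₗ[K] K) ≃ₗ[k] (W →ₗ[k] k) :=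
  LinearEquiv.ofBijective _ (traceComp_bijective k K W)

variable (F : Type*) [Field F] [Algebra k F] [FiniteDimensional k F] [Algebra.IsSeparable k F]
  [Module F W] [IsScalarTower k F W] [FiniteDimensional F W]

noncomputable def dualTransfer : (W →ₗ[K] K) ≃ₗ[k] (W →ₗ[F] F) :=
  traceCompEquiv k K W ≪≫ₗ (traceCompEquiv k F W).symm

lemma dualTransfer_symm : (dualTransfer k K W F).symm = dualTransfer k F W K := rfl

variable {k K W F}

@[simp]
lemma traceComp_dualTransfer (f : W →ₗ[K] K) :
    traceComp k F W (dualTransfer k K W F f) = traceComp k K W f :=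
  (traceCompEquiv k F W).apply_symm_apply _

lemma dualTransfer_smul [SMulCommClass K F W] (c : K) (f : W →ₗ[K] K) :
    dualTransfer k K W F (c • f) =
      (dualTransfer k K W F f).comp (DistribSMul.toLinearMap F W c) := by
  apply traceComp_injective k F W
  ext w
  rw [traceComp_comp_toLinearMap, traceComp_dualTransfer, LinearMap.comp_apply,
    traceComp_dualTransfer]
  exact traceComp_smul_apply c f w

end Field

/-- Let `k` be a field, `K` and `F` finite separable extensions of `k`, and `W` a finitely
generated module over `K ⊗_k F` (encoded as a space with commuting `K`- and `F`-actions,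
compatible over `k`, finite-dimensional over `K`).  Then `Hom_K(W, K) ≅ Hom_F(W, F)` as
`K ⊗_k F`-modules, where `K` acts on `Hom_K(W, K)` via the target and `F` by precomposition,
and symmetrically on `Hom_F(W, F)`.  In particular, composition with the trace identifies
each of these Hom-modules `K ⊗_k F`-linearly with `Hom_k(W, k)`. -/
theorem stmt13 (k K F W : Type*) [Field k] [Field K] [Field F]
    [Algebra k K] [Algebra k F] [FiniteDimensional k K] [FiniteDimensional k F]
    [Algebra.IsSeparable k K] [Algebra.IsSeparable k F]
    [AddCommGroup W] [Module k W] [Module K W] [Module F W]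
    [IsScalarTower k K W] [IsScalarTower k F W] [SMulCommClass K F W]
    [FiniteDimensional K W] :
    (∃ e : (W →ₗ[K] K) ≃+ (W →ₗ[F] F),
        (∀ (c : K) (f : W →ₗ[K] K) (w : W), e (c • f) w = e f (c • w)) ∧
        (∀ (d : F) (φ : W →ₗ[F] F) (w : W), e.symm (d • φ) w = e.symm φ (d • w))) ∧
    (Function.Bijective (fun f : W →ₗ[K] K =>
        ((Algebra.trace k K).comp (f.restrictScalars k) : W →ₗ[k] k)) ∧
      ∀ (c : K) (f : W →ₗ[K] K) (w : W),
        (Algebra.trace k K).comp ((c • f).restrictScalars k) w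
          = (Algebra.trace k K).comp (f.restrictScalars k) (c • w)) ∧
    (Function.Bijective (fun φ : W →ₗ[F] F =>
        ((Algebra.trace k F).comp (φ.restrictScalars k) : W →ₗ[k] k)) ∧
      ∀ (d : F) (φ : W →ₗ[F] F) (w : W),
        (Algebra.trace k F).comp ((d • φ).restrictScalars k) w
          = (Algebra.trace k F).comp (φ.restrictScalars k) (d • w)) := by
  have : FiniteDimensional F W := by
    have : FiniteDimensional k W := FiniteDimensional.trans k K W
    exact FiniteDimensional.right k F W
  have : SMulCommClass F K W := SMulCommClass.symm K F W
  refine ⟨⟨(dualTransfer k K W F).toAddEquiv, fun c f w => ?_, fun d φ w => ?_⟩,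
    ⟨traceComp_bijective k K W, traceComp_smul_apply⟩,
    ⟨traceComp_bijective k F W, traceComp_smul_apply⟩⟩
  · change dualTransfer k K W F (c • f) w = dualTransfer k K W F f (c • w)
    exact LinearMap.congr_fun (dualTransfer_smul c f) w
  · change (dualTransfer k K W F).symm (d • φ) w = (dualTransfer k K W F).symm φ (d • w)
    rw [dualTransfer_symm]
    exact LinearMap.congr_fun (dualTransfer_smul d φ) w
end
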